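/- For every finite simple graph G on n vertices in which every vertex has degree at least δ (with δ a natural number), and for every real number p with 0 ≤ p ≤ 1, there exists a dominating set S of G with |S| ≤ n·(p + (1−p)^(δ+1)). -/

import Mathlib

/-!
Put each vertex into `X` independently with probability `p`, and let `U` be the set of vertices
that have no vertex of `X` in their closed neighbourhood. Then `X ∪ U` dominates `G`. A vertex lies
in `X` with probability `p` and in `U` with probability `(1 - p) ^ (deg v + 1) ≤ (1 - p) ^ (δ + 1)`,
so `𝔼 (#X + #U) ≤ n (p + (1 - p) ^ (δ + 1))`, and some outcome is at most this expectation.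
-/

def SimpleGraph.IsDominatingSet {V : Type*} (G : SimpleGraph V) (S : Finset V) : Prop :=
  ∀ v : V, v ∈ S ∨ ∃ u ∈ S, G.Adj u v

open Finset

namespace Finset

theorem sum_mul_card_filter_comm {ι β R : Type*} [CommSemiring R] (s : Finset ι) (t : Finset β)
    (w : ι → R) (P : ι → β → Prop) [∀ i b, Decidable (P i b)] :
    ∑ i ∈ s, w i * #{b ∈ t | P i b} = ∑ b ∈ t, ∑ i ∈ s with P i b, w i := by
  simp only [card_filter, Nat.cast_sum, Nat.cast_ite, Nat.cast_one, Nat.cast_zero, mul_sum,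
    mul_ite, mul_one, mul_zero, sum_filter]
  exact sum_comm

variable {α : Type*} [DecidableEq α]

/-- The probability of the outcome `X ⊆ s` when every element of `s` is put into `X`
independently with probability `p`. -/
def bernoulliWeight (p : ℝ) (s X : Finset α) : ℝ := p ^ #X * (1 - p) ^ #(s \ X)

theorem bernoulliWeight_nonneg {p : ℝ} (hp0 : 0 ≤ p) (hp1 : p ≤ 1) (s X : Finset α) :
    0 ≤ bernoulliWeight p s X :=
  mul_nonneg (pow_nonneg hp0 _) (pow_nonneg (sub_nonneg.mpr hp1) _)

theorem sum_bernoulliWeight_disjoint (p : ℝ) (s A : Finset α) :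
    ∑ X ∈ s.powerset with Disjoint X A, bernoulliWeight p s X = (1 - p) ^ #(s ∩ A) := by
  -- Expand `∏ a ∈ s, (p·[a ∉ A] + (1 - p))` over the subsets of `s`.
  have h := prod_add (fun a => if a ∉ A then p else 0) (fun _ => 1 - p) s
  have hfactor : ∀ a, ((if a ∉ A then p else 0) + (1 - p)) = if a ∈ A then 1 - p else 1 := by
    intro a; split_ifs <;> simp_all
  simp only [hfactor, prod_ite_mem, prod_const, prod_ite_zero] at h
  rw [h, sum_filter]
  refine sum_congr rfl fun X _ => ?_
  simp only [bernoulliWeight, disjoint_left, ite_mul, zero_mul]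

theorem sum_bernoulliWeight (p : ℝ) (s : Finset α) :
    ∑ X ∈ s.powerset, bernoulliWeight p s X = 1 := by
  simpa using sum_bernoulliWeight_disjoint p s ∅

theorem sum_bernoulliWeight_mem (p : ℝ) {s : Finset α} {a : α} (ha : a ∈ s) :
    ∑ X ∈ s.powerset with a ∈ X, bernoulliWeight p s X = p := by
  have h := sum_filter_add_sum_filter_not s.powerset (a ∈ ·) (bernoulliWeight p s)
  simp only [← disjoint_singleton_right, sum_bernoulliWeight_disjoint, sum_bernoulliWeight,
    inter_singleton_of_mem ha, card_singleton, pow_one] at h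
  linarith

theorem sum_bernoulliWeight_mul_card (p : ℝ) (s : Finset α) :
    ∑ X ∈ s.powerset, bernoulliWeight p s X * #X = #s * p := by
  calc ∑ X ∈ s.powerset, bernoulliWeight p s X * #X
      = ∑ X ∈ s.powerset, bernoulliWeight p s X * #{a ∈ s | a ∈ X} :=
        sum_congr rfl fun X hX => by
          rw [filter_mem_eq_inter, inter_eq_right.mpr (mem_powerset.mp hX)]
    _ = ∑ a ∈ s, p := by
        rw [sum_mul_card_filter_comm]
        exact sum_congr rfl fun a ha => sum_bernoulliWeight_mem p ha
    _ = #s * p := by rw [sum_const, nsmul_eq_mul]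

theorem exists_le_sum_bernoulliWeight_mul {p : ℝ} (hp0 : 0 ≤ p) (hp1 : p ≤ 1) (s : Finset α)
    (f : Finset α → ℝ) :
    ∃ X ⊆ s, f X ≤ ∑ X ∈ s.powerset, bernoulliWeight p s X * f X := by
  obtain ⟨X, hX, hle⟩ := (concaveOn_id convex_univ).exists_le_of_centerMass (t := s.powerset)
    (w := bernoulliWeight p s) (p := f) (fun X _ => bernoulliWeight_nonneg hp0 hp1 s X)
    (by rw [sum_bernoulliWeight]; exact one_pos) (fun _ _ => Set.mem_univ _)
  rw [centerMass_eq_of_sum_1 _ _ (sum_bernoulliWeight p s)] at hle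
  exact ⟨X, mem_powerset.mp hX, hle⟩

end Finset

namespace SimpleGraph

variable {V : Type*} [Fintype V] [DecidableEq V] (G : SimpleGraph V) [DecidableRel G.Adj]

def closedNeighborFinset (v : V) : Finset V := insert v (G.neighborFinset v)

theorem card_closedNeighborFinset (v : V) : #(G.closedNeighborFinset v) = G.degree v + 1 := by
  rw [closedNeighborFinset, card_insert_of_notMem (by simp), card_neighborFinset_eq_degree]

def undominatedFinset (X : Finset V) : Finset V := {v | Disjoint X (G.closedNeighborFinset v)}

theorem isDominatingSet_union_undominatedFinset (X : Finset V) :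
    G.IsDominatingSet (X ∪ G.undominatedFinset X) := by
  intro v
  by_cases h : Disjoint X (G.closedNeighborFinset v)
  · exact .inl (mem_union_right _ (by simpa [undominatedFinset] using h))
  · obtain ⟨u, huX, hu⟩ := not_disjoint_iff.mp h
    rcases mem_insert.mp hu with rfl | hadj
    · exact .inl (mem_union_left _ huX)
    · exact .inr ⟨u, mem_union_left _ huX, ((G.mem_neighborFinset v u).mp hadj).symm⟩

theorem sum_bernoulliWeight_mul_card_undominatedFinset_le {δ : ℕ}
    (hδ : ∀ v : V, δ ≤ G.degree v) {p : ℝ} (hp0 : 0 ≤ p) (hp1 : p ≤ 1) :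
    ∑ X ∈ (univ : Finset V).powerset, bernoulliWeight p univ X * #(G.undominatedFinset X)
      ≤ Fintype.card V * (1 - p) ^ (δ + 1) := by
  calc ∑ X ∈ (univ : Finset V).powerset, bernoulliWeight p univ X * #(G.undominatedFinset X)
      = ∑ v, (1 - p) ^ (G.degree v + 1) := by
        simp only [undominatedFinset, sum_mul_card_filter_comm, sum_bernoulliWeight_disjoint,
          univ_inter, card_closedNeighborFinset]
    _ ≤ ∑ _v : V, (1 - p) ^ (δ + 1) :=
        sum_le_sum fun v _ => pow_le_pow_of_le_one (sub_nonneg.mpr hp1) (by linarith)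
          (Nat.succ_le_succ (hδ v))
    _ = Fintype.card V * (1 - p) ^ (δ + 1) := by rw [sum_const, card_univ, nsmul_eq_mul]

end SimpleGraph

/-- Probabilistic bound: a graph on `n` vertices with minimum degree at least `δ` has, for each
`0 ≤ p ≤ 1`, a dominating set of size at most `n·(p + (1−p)^(δ+1))`. -/
theorem exists_dominatingSet_card_le_prob_bound
    {V : Type*} [Fintype V] [DecidableEq V] (G : SimpleGraph V) [DecidableRel G.Adj]
    (δ : ℕ) (hδ : ∀ v : V, δ ≤ G.degree v)
    (p : ℝ) (hp0 : 0 ≤ p) (hp1 : p ≤ 1) :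
    ∃ S : Finset V, G.IsDominatingSet S ∧
      (S.card : ℝ) ≤ (Fintype.card V : ℝ) * (p + (1 - p) ^ (δ + 1)) := by
  set w := bernoulliWeight p (univ : Finset V)
  obtain ⟨X, -, hX⟩ := exists_le_sum_bernoulliWeight_mul hp0 hp1 univ
    fun X => (#X + #(G.undominatedFinset X) : ℝ)
  refine ⟨X ∪ G.undominatedFinset X, G.isDominatingSet_union_undominatedFinset X, ?_⟩
  calc (#(X ∪ G.undominatedFinset X) : ℝ) ≤ #X + #(G.undominatedFinset X) := by
        exact_mod_cast card_union_le _ _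
    _ ≤ ∑ Y ∈ univ.powerset, w Y * (#Y + #(G.undominatedFinset Y)) := hX
    _ = ∑ Y ∈ univ.powerset, w Y * #Y + ∑ Y ∈ univ.powerset, w Y * #(G.undominatedFinset Y) := by
        simp only [mul_add, sum_add_distrib]
    _ ≤ Fintype.card V * p + Fintype.card V * (1 - p) ^ (δ + 1) :=
        add_le_add (sum_bernoulliWeight_mul_card p univ).le
          (G.sum_bernoulliWeight_mul_card_undominatedFinset_le hδ hp0 hp1)
    _ = Fintype.card V * (p + (1 - p) ^ (δ + 1)) := by ring
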